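/- Let m be even, n odd, m and n coprime positive integers with σ(m)σ(n) = (m+n)². Then, setting N = mn/2, we have σ(N)/N > 2. -/
import Mathlib

/-- sum-of-divisors function -/
def sigma (n : ℕ) : ℕ := ∑ d ∈ n.divisors, d

lemma sigma_eq (n : ℕ) : sigma n = ArithmeticFunction.sigma 1 n := by
  rw [ArithmeticFunction.sigma_one_apply]; rfl

lemma sigma_mul (a b : ℕ) (h : Nat.Coprime a b) :
    sigma (a * b) = sigma a * sigma b := by
  simp only [sigma_eq]
  exact ArithmeticFunction.isMultiplicative_sigma.map_mul_of_coprime h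

lemma sigma_two_pow (i : ℕ) : sigma (2 ^ i) = 2 ^ (i + 1) - 1 := by
  rw [sigma_eq, ArithmeticFunction.sigma_one_apply_prime_pow Nat.prime_two,
    Nat.geomSum_eq le_rfl]
  simp

/-- If m is even, n odd, coprime, σ(m)σ(n) = (m+n)², and N = mn/2,
    then σ(N)/N > 2. -/
theorem abundancy_gt_two (m n N : ℕ) (hm : 0 < m) (hn : 0 < n)
    (hme : Even m) (hno : Odd n) (hcop : Nat.Coprime m n)
    (h : sigma m * sigma n = (m + n) ^ 2) (hN : N = m * n / 2) :
    (2 : ℝ) < (sigma N : ℝ) / N := by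
  set a := m.factorization 2 with ha_def
  set m' := m / 2 ^ a with hm'_def
  have hm0 : m ≠ 0 := hm.ne'
  have hmdecomp : 2 ^ a * m' = m := Nat.ordProj_mul_ordCompl_eq_self m 2
  have ha1 : 1 ≤ a :=
    Nat.Prime.factorization_pos_of_dvd Nat.prime_two hm0 hme.two_dvd
  have hm'0 : 0 < m' := Nat.ordCompl_pos 2 hm0
  have hm'odd : ¬ 2 ∣ m' := Nat.not_dvd_ordCompl Nat.prime_two hm0
  have hm'n_odd : ¬ 2 ∣ (m' * n) := by
    rintro hdvd
    rcases (Nat.Prime.dvd_mul Nat.prime_two).mp hdvd with h1 | h1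
    · exact hm'odd h1
    · exact (Nat.not_even_iff_odd.mpr hno) (even_iff_two_dvd.mpr h1)
  have hcop2 : ∀ k : ℕ, Nat.Coprime (2 ^ k) (m' * n) := fun k =>
    Nat.Coprime.pow_left k ((Nat.Prime.coprime_iff_not_dvd Nat.prime_two).mpr hm'n_odd)
  -- m * n = 2^a * (m' * n)
  have hmn : m * n = 2 ^ a * (m' * n) := by rw [← hmdecomp]; ring
  -- N = 2^(a-1) * (m' * n)
  have hNa : N = 2 ^ (a - 1) * (m' * n) := by
    have : 2 ^ a = 2 * 2 ^ (a - 1) := by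
      rw [← pow_succ']
      congr 1
      omega
    rw [hN, hmn, this, mul_assoc, Nat.mul_div_cancel_left _ (by norm_num)]
  set S := sigma (m' * n) with hS
  have hmn_sigma : sigma (m * n) = (2 ^ (a + 1) - 1) * S := by
    rw [hmn, sigma_mul _ _ (hcop2 a), sigma_two_pow]
  have hN_sigma : sigma N = (2 ^ a - 1) * S := by
    have he : a - 1 + 1 = a := by omega
    rw [hNa, sigma_mul _ _ (hcop2 (a - 1)), sigma_two_pow, he]
  have hsig_mn : sigma (m * n) = (m + n) ^ 2 := by
    rw [sigma_mul _ _ hcop, h]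
  -- 3 * sigma N ≥ sigma (m * n)
  have hx : 2 ≤ 2 ^ a := by
    calc 2 = 2 ^ 1 := (pow_one 2).symm
    _ ≤ 2 ^ a := Nat.pow_le_pow_right (by norm_num) ha1
  have hpow : 2 ^ (a + 1) = 2 * 2 ^ a := by rw [pow_succ]; ring
  have key : sigma (m * n) ≤ 3 * sigma N := by
    rw [hmn_sigma, hN_sigma, ← mul_assoc]
    apply Nat.mul_le_mul_right
    omega
  -- (m+n)^2 ≥ 4mn + 1
  have hne : m ≠ n := by
    rintro rfl
    exact (Nat.not_even_iff_odd.mpr hno) hme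
  have hsq : 4 * (m * n) + 1 ≤ (m + n) ^ 2 := by
    rcases Nat.lt_or_ge m n with h1 | h1
    · nlinarith
    · have : n < m := lt_of_le_of_ne h1 (fun e => hne e.symm)
      nlinarith
  have hmn_pos : 0 < m * n := Nat.mul_pos hm hn
  have hgt : m * n < sigma N := by
    have : 4 * (m * n) + 1 ≤ 3 * sigma N := by
      calc 4 * (m * n) + 1 ≤ (m + n) ^ 2 := hsq
      _ = sigma (m * n) := hsig_mn.symm
      _ ≤ 3 * sigma N := key
    omega
  have h2N : 2 * N = m * n := by
    rw [hN, Nat.mul_div_cancel']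
    exact Dvd.dvd.mul_right hme.two_dvd n
  have hNpos : 0 < N := by omega
  rw [lt_div_iff₀ (by exact_mod_cast hNpos)]
  have : 2 * N < sigma N := by omega
  exact_mod_cast this
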